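/- In the two-candidate reduced instance, for every B ⊆ {1, …, m}, setting W = {v_i : i ∈ B}, the set H_W of vertices reachable from u_1 in the induced subgraph of G on V \ W is exactly {u_1, …, u_{ℓ(3m−1)}} ∪ {r} ∪ {v_i : i ∉ B} ∪ {w_{j,k} : j ∈ {1,…,m}, k ∈ ⋃_{i ∈ {1,…,m} \ B} S_i}. -/

import Mathlib

/-- Vertices of the two-candidate reduced instance: the path vertices
`u_1, …, u_{ℓ(3m−1)}` (0-indexed as `u i` for `i : Fin (ℓ * (3 * m - 1))`, so `u_1` is
`u ⟨0, _⟩`), the vertex `r`, the vertices `v_1, …, v_m`, and the vertices `w_{j,k}` for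
`j ∈ [m]`, `k ∈ [3ℓ]` (both 0-indexed). -/
inductive V2 (ℓ m : ℕ) : Type
  | u (i : Fin (ℓ * (3 * m - 1))) : V2 ℓ m
  | r : V2 ℓ m
  | v (i : Fin m) : V2 ℓ m
  | w (j : Fin m) (k : Fin (3 * ℓ)) : V2 ℓ m
  deriving DecidableEq

/-- Base edge relation of the two-candidate reduced instance: `u_i ~ u_{i+1}`,
`u_{ℓ(3m−1)} ~ r`, `r ~ v_i` for all `i`, and `v_i ~ w_{j,k}` iff `k ∈ S i`. -/
def baseRel2 (ℓ m : ℕ) (S : Fin m → Finset (Fin (3 * ℓ))) :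
    V2 ℓ m → V2 ℓ m → Prop
  | .u i, .u i' => (i : ℕ) + 1 = (i' : ℕ)
  | .u i, .r => (i : ℕ) + 1 = ℓ * (3 * m - 1)
  | .r, .v _ => True
  | .v i, .w _ k => k ∈ S i
  | _, _ => False

/-- The graph of the two-candidate reduced instance. -/
def G2 (ℓ m : ℕ) (S : Fin m → Finset (Fin (3 * ℓ))) : SimpleGraph (V2 ℓ m) :=
  SimpleGraph.fromRel (baseRel2 ℓ m S)

/-- The voting function of the two-candidate reduced instance: `u`'s and `v`'s vote for
candidate `0`; `r` and the `w`'s vote for candidate `1`. -/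
def τ2 (ℓ m : ℕ) : V2 ℓ m → Fin 2
  | .u _ => 0
  | .r => 1
  | .v _ => 0
  | .w _ _ => 1

/-- The distinguished vertex `x = u_1`. -/
def x2 (ℓ m : ℕ) (h : 0 < ℓ * (3 * m - 1)) : V2 ℓ m := V2.u ⟨0, h⟩

/-- `HW G W x`: the set of vertices reachable from `x` in the subgraph of `G` induced on
the complement of `W` (each step of a connecting walk must avoid `W`). -/
def HW {V : Type*} (G : SimpleGraph V) (W : Set V) (x : V) : Set V :=
  {z | Relation.ReflTransGen (fun a b => G.Adj a b ∧ a ∉ W ∧ b ∉ W) x z}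

/-- With two candidates, candidate `1` uniquely wins the election restricted to `W` iff
`|H_W ∩ τ⁻¹(1)| > |H_W ∩ τ⁻¹(0)|`. -/
def wins2 (ℓ m : ℕ) (S : Fin m → Finset (Fin (3 * ℓ))) (x : V2 ℓ m)
    (W : Set (V2 ℓ m)) : Prop :=
  (HW (G2 ℓ m S) W x ∩ τ2 ℓ m ⁻¹' {0}).ncard <
    (HW (G2 ℓ m S) W x ∩ τ2 ℓ m ⁻¹' {1}).ncard

/-- For a deletion set `W = {v_i : i ∈ B}`, the set of vertices reachable from `u_1` is
exactly all the `u`'s, `r`, the undeleted `v_i`'s, and the `w_{j,k}` with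
`k ∈ ⋃_{i ∉ B} S_i`. -/
theorem reachable_set_after_deleting_v (ℓ m : ℕ) (hℓ : 1 ≤ ℓ) (hm : 1 ≤ m)
    (S : Fin m → Finset (Fin (3 * ℓ)))
    (hS3 : ∀ i, (S i).card = 3)
    (hcov : Finset.univ.biUnion S = Finset.univ)
    (B : Set (Fin m)) :
    HW (G2 ℓ m S) {z | ∃ i ∈ B, z = V2.v i} (x2 ℓ m (Nat.mul_pos hℓ (by omega))) =
      {z | ∃ i, z = V2.u i} ∪ {V2.r} ∪ {z | ∃ i, i ∉ B ∧ z = V2.v i} ∪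
        {z | ∃ j k, (∃ i, i ∉ B ∧ k ∈ S i) ∧ z = V2.w j k} := by
  have hN : 0 < ℓ * (3 * m - 1) := Nat.mul_pos hℓ (by omega)
  set Wset : Set (V2 ℓ m) := {z | ∃ i ∈ B, z = V2.v i} with hWdef
  set R : V2 ℓ m → V2 ℓ m → Prop :=
    fun a b => (G2 ℓ m S).Adj a b ∧ a ∉ Wset ∧ b ∉ Wset with hRdef
  have huW : ∀ i, V2.u i ∉ Wset := by
    rintro i ⟨j, hj, h⟩; exact nomatch h
  have hrW : V2.r ∉ Wset := by
    rintro ⟨j, hj, h⟩; exact nomatch h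
  have hwW : ∀ j k, V2.w j k ∉ Wset := by
    rintro j k ⟨j', hj', h⟩; exact nomatch h
  have hvW : ∀ i, i ∉ B → V2.v i ∉ Wset := by
    rintro i hi ⟨j, hj, h⟩
    obtain rfl : i = j := by injection h
    exact hi hj
  ext z
  constructor
  · intro hz
    induction hz with
    | refl => exact Or.inl (Or.inl (Or.inl ⟨_, rfl⟩))
    | tail hab hstep ih =>
      obtain ⟨hadj, ha, hb⟩ := hstep
      rw [G2, SimpleGraph.fromRel_adj] at hadj
      obtain ⟨hne, hrel⟩ := hadj
      rename_i b c
      cases c with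
      | u i' => exact Or.inl (Or.inl (Or.inl ⟨_, rfl⟩))
      | r => exact Or.inl (Or.inl (Or.inr rfl))
      | v i =>
        refine Or.inl (Or.inr ⟨i, fun hi => hb ⟨i, hi, rfl⟩, rfl⟩)
      | w j k =>
        cases b with
        | u i'' => simp [baseRel2] at hrel
        | r => simp [baseRel2] at hrel
        | w j' k' => simp [baseRel2] at hrel
        | v i =>
          have hk : k ∈ S i := by simpa [baseRel2] using hrel
          exact Or.inr ⟨j, k, ⟨i, fun hi => ha ⟨i, hi, rfl⟩, hk⟩, rfl⟩
  · have key : ∀ n (h : n < ℓ * (3 * m - 1)),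
        Relation.ReflTransGen R (x2 ℓ m hN) (V2.u ⟨n, h⟩) := by
      intro n
      induction n with
      | zero => intro h; exact Relation.ReflTransGen.refl
      | succ p ih =>
        intro h
        refine (ih (by omega)).tail ⟨?_, huW _, huW _⟩
        rw [G2, SimpleGraph.fromRel_adj]
        refine ⟨?_, Or.inl ?_⟩
        · intro he
          have : p = p + 1 := by
            have := congrArg (fun z => match z with
              | V2.u i => (i : ℕ) | _ => 0) he
            simpa using this
          omega
        · simp [baseRel2]
    have hreachr : Relation.ReflTransGen R (x2 ℓ m hN) V2.r := by
      refine (key (ℓ * (3 * m - 1) - 1) (by omega)).tail ⟨?_, huW _, hrW⟩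
      rw [G2, SimpleGraph.fromRel_adj]
      exact ⟨fun he => (nomatch he), Or.inl (by simp [baseRel2]; omega)⟩
    have hreachv : ∀ i, i ∉ B → Relation.ReflTransGen R (x2 ℓ m hN) (V2.v i) := by
      intro i hi
      refine hreachr.tail ⟨?_, hrW, hvW i hi⟩
      rw [G2, SimpleGraph.fromRel_adj]
      exact ⟨fun he => (nomatch he), Or.inl (by simp [baseRel2])⟩
    rintro (((⟨i, rfl⟩ | rfl) | ⟨i, hi, rfl⟩) | ⟨j, k, ⟨i, hi, hk⟩, rfl⟩)
    · exact key i.val i.isLt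
    · exact hreachr
    · exact hreachv i hi
    · refine (hreachv i hi).tail ⟨?_, hvW i hi, hwW j k⟩
      rw [G2, SimpleGraph.fromRel_adj]
      exact ⟨fun he => (nomatch he), Or.inl (by simpa [baseRel2] using hk)⟩
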